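/- arXiv:0801.4114 — 2 statements merged into one kernel-verified Lean document; each statement's English description precedes it below -/
import Mathlib

section
/- Let Q be a reduced word for v with last letter r_α, and Q' = Q minus its last letter. If w r_α < w and w ≰ v r_α, then no face of Δ(Q,w) contains the last position ℓ(v), and Δ(Q,w) = Δ(Q', w r_α) (as complexes on the first ℓ(v)−1 positions). -/
variable {B W : Type*} [DecidableEq B] [Group W] {M : CoxeterMatrix B} (cs : CoxeterSystem M W)

/-- The Bruhat order on a Coxeter group, via the subword property:
`u ≤ v` iff every reduced word for `v` contains a subword that is a reduced word for `u`. -/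
def BruhatLe (u v : W) : Prop :=
  ∀ Q : List B, cs.IsReduced Q → cs.wordProd Q = v →
    ∃ P : List B, P.Sublist Q ∧ cs.IsReduced P ∧ cs.wordProd P = u

/-- The Demazure product of a word in the simple reflections: multiply the letters in
order, omitting any letter that would decrease the length. -/
noncomputable def Dem (Q : List B) : W :=
  Q.foldl (fun w b => if cs.length w < cs.length (w * cs.simple b) then w * cs.simple b else w) 1

/-- The subword of `Q` obtained by deleting the letters at the positions in `F`
(positions are `0`-indexed); this is the complementary subword `Q ∖ F`. -/
def dmask (Q : List B) (F : Finset ℕ) : List B :=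
  (Q.zipIdx.filter fun p => p.2 ∉ F).map Prod.fst

/-- The subword of `Q` consisting of the letters at the positions in `F` (in order). -/
def smask (Q : List B) (F : Finset ℕ) : List B :=
  (Q.zipIdx.filter fun p => p.2 ∈ F).map Prod.fst

/-- `F` is a face of the subword complex `Δ(Q,w)`: `F` is a set of positions of `Q` such
that the complementary subword `Q ∖ F` contains a reduced word for `w`. -/
def IsFace (Q : List B) (w : W) (F : Finset ℕ) : Prop :=
  F ⊆ Finset.range Q.length ∧
    ∃ P : List B, P.Sublist (dmask Q F) ∧ cs.IsReduced P ∧ cs.wordProd P = w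

/-- `F` is a facet (maximal face) of the subword complex `Δ(Q,w)`. -/
def IsFacet (Q : List B) (w : W) (F : Finset ℕ) : Prop :=
  IsFace cs Q w F ∧ ∀ F' : Finset ℕ, IsFace cs Q w F' → F ⊆ F' → F' = F

/-!
Since `Q'` is a reduced word for `v * sₐ`, a subword of `Q'` with product `w` would give
`w ≤ v * sₐ` by the subword property of the Bruhat order. So a reduced word for `w` inside
`Q ∖ F` must use the last letter `a`, whence `ℓ(v) - 1 ∉ F`; and as `w * sₐ < w`, deleting or
appending this letter matches reduced words for `w` in `Q ∖ F` with reduced words for `w * sₐ`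
in `Q' ∖ F`.

The subword property comes from the strong exchange condition through chains in the Bruhat
graph: a subword of a reduced word is joined to it by a chain (the lifting step is
`u → t u ⟹ s u ≤ t u` or `s u ≤ s t u`), and along a chain exchange and deletion find subwords
of every reduced word. Strong exchange in turn holds because the parity of the number of
occurrences of a reflection in the left inversion sequence of a word depends only on the
product of the word: the inversion sequences assemble into a homomorphism
`W → (W → ZMod 2) ⋊ W`.
-/

open List

section

omit [DecidableEq B]

def precompConj : W →* MulAut (W → Multiplicative (ZMod 2)) where
  toFun w :=
    { toFun := fun f t => f (w⁻¹ * t * w)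
      invFun := fun f t => f (w * t * w⁻¹)
      left_inv := fun f => by funext t; group
      right_inv := fun f => by funext t; group
      map_mul' := fun _ _ => rfl }
  map_one' := by ext; simp
  map_mul' := fun _ _ => by ext; simp [mul_assoc]

section ReflectionCocycle

open scoped Classical

noncomputable def countParity {α : Type*} (L : List α) : α → Multiplicative (ZMod 2) :=
  fun t => Multiplicative.ofAdd (L.count t : ZMod 2)

theorem countParity_append {α : Type*} (L L' : List α) :
    countParity (L ++ L') = countParity L * countParity L' := by
  funext t
  simp [countParity, count_append, ofAdd_add]

theorem countParity_append_self {α : Type*} (L : List α) : countParity (L ++ L) = 1 := by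
  funext t
  simp [countParity, count_append, ← two_mul, show (2 : ZMod 2) = 0 from rfl]

theorem countParity_map_conj (u : W) (L : List W) :
    countParity (L.map (MulAut.conj u)) = precompConj u (countParity L) := by
  funext t
  have ht : t = MulAut.conj u (u⁻¹ * t * u) := by simp [mul_assoc]
  simp only [countParity, precompConj, MonoidHom.coe_mk, OneHom.coe_mk, MulEquiv.coe_mk,
    Equiv.coe_fn_mk]
  nth_rw 1 [ht]
  rw [count_map_of_injective _ _ (MulAut.conj u).injective]

namespace CoxeterSystem

local prefix:100 "s " => cs.simple
local prefix:100 "π " => cs.wordProd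
local prefix:100 "ℓ " => cs.length
local prefix:100 "lis " => cs.leftInvSeq

theorem leftInvSeq_append (ω ω' : List B) :
    lis (ω ++ ω') = lis ω ++ (lis ω').map (MulAut.conj (π ω)) := by
  induction ω with
  | nil => simp
  | cons i ω ih => simp [leftInvSeq, ih, wordProd_cons, Function.comp_def]

theorem leftInvSeq_flatten_replicate (i j : B) (m : ℕ) :
    lis (replicate m [i, j]).flatten = (range (2 * m)).map fun k => (s i * s j) ^ k * s i := by
  induction m with
  | zero => simp
  | succ m ih =>
    have hprod : π (replicate m [i, j]).flatten = (s i * s j) ^ m := by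
      simp [wordProd, map_flatten, prod_flatten, map_replicate, prod_replicate]
    have hconj : s i * ((s i * s j) ^ m)⁻¹ = (s i * s j) ^ m * s i := by
      rw [← inv_pow, mul_inv_rev, inv_simple, inv_simple]
      exact SemiconjBy.pow_right (by simp [SemiconjBy, mul_assoc]) m
    have h₁ : (s i * s j) ^ m * s i * ((s i * s j) ^ m)⁻¹ = (s i * s j) ^ (2 * m) * s i := by
      rw [mul_assoc, hconj, ← mul_assoc, ← pow_add, two_mul]
    have h₂ : (s i * s j) ^ m * (s i * s j * s i) * ((s i * s j) ^ m)⁻¹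
        = (s i * s j) ^ (2 * m + 1) * s i := by
      rw [mul_assoc, mul_assoc (s i * s j), hconj, ← mul_assoc, ← mul_assoc, ← pow_succ,
        ← pow_add]
      ring_nf
    rw [replicate_succ', flatten_append, leftInvSeq_append, ih, hprod,
      show 2 * (m + 1) = 2 * m + 1 + 1 by ring, range_succ, range_succ]
    have hpair : lis [i, j] = [s i, s i * s j * s i] := by simp [leftInvSeq, inv_simple]
    simp only [flatten_cons, flatten_nil, append_nil, hpair, map_cons, map_nil, MulAut.conj_apply,
      h₁, h₂, map_append, append_assoc, cons_append, nil_append]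

noncomputable def reflCocycleGen (i : B) : (W → Multiplicative (ZMod 2)) ⋊[precompConj] W :=
  ⟨countParity [s i], s i⟩

theorem prod_map_reflCocycleGen (ω : List B) :
    (ω.map cs.reflCocycleGen).prod = ⟨countParity (lis ω), π ω⟩ := by
  induction ω with
  | nil => rfl
  | cons i ω ih =>
    rw [map_cons, prod_cons, ih, reflCocycleGen, SemidirectProduct.mul_def, ← countParity_map_conj,
      ← countParity_append, wordProd_cons]
    rfl

theorem isLiftable_reflCocycleGen : M.IsLiftable cs.reflCocycleGen := by
  intro i j
  have hpow : (cs.reflCocycleGen i * cs.reflCocycleGen j) ^ M i j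
      = (((replicate (M i j) [i, j]).flatten).map cs.reflCocycleGen).prod := by
    simp [map_flatten, prod_flatten, map_replicate, prod_replicate]
  have hprod : π (replicate (M i j) [i, j]).flatten = 1 := by
    simp [wordProd, map_flatten, prod_flatten, map_replicate, prod_replicate,
      simple_mul_simple_pow]
  -- `(sᵢsⱼ)ᵏsᵢ` has period `M i j` in `k`, so every reflection occurs an even number of times
  -- in the inversion sequence of `(ij)^(M i j)`.
  have hperiod : ∀ k, (s i * s j) ^ (M i j + k) * s i = (s i * s j) ^ k * s i := by
    simp [pow_add, simple_mul_simple_pow]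
  rw [hpow, prod_map_reflCocycleGen, hprod, leftInvSeq_flatten_replicate, two_mul, range_add,
    map_append, map_map, Function.comp_def]
  simp only [hperiod, countParity_append_self]
  rfl

theorem natCast_count_leftInvSeq_eq {ω ω' : List B} (h : π ω = π ω') (t : W) :
    ((lis ω).count t : ZMod 2) = (lis ω').count t := by
  have hlift (ω : List B) :
      cs.lift ⟨_, cs.isLiftable_reflCocycleGen⟩ (π ω) = ⟨countParity (lis ω), π ω⟩ := by
    rw [← prod_map_reflCocycleGen, wordProd, map_list_prod, map_map]
    congr 2
    funext i
    exact cs.lift_apply_simple cs.isLiftable_reflCocycleGen i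
  have := congrArg (fun x => Multiplicative.toAdd (x.left t)) ((hlift ω).symm.trans (h ▸ hlift ω'))
  simpa [countParity] using this

theorem odd_count_leftInvSeq_palindrome (υ : List B) (i : B) :
    Odd ((lis (υ ++ i :: υ.reverse)).count (π υ * s i * (π υ)⁻¹)) := by
  induction υ with
  | nil => simp
  | cons j υ ih =>
    set t := π υ * s i * (π υ)⁻¹
    have hword : (j :: υ) ++ i :: (j :: υ).reverse = j :: ((υ ++ i :: υ.reverse).concat j) := by
      simp
    have hπ : π (υ ++ i :: υ.reverse) = t := by
      simp [t, wordProd_append, wordProd_cons, wordProd_reverse, mul_assoc]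
    have ht : π (j :: υ) * s i * (π (j :: υ))⁻¹ = MulAut.conj (s j) t := by
      simp [t, wordProd_cons, mul_assoc, inv_simple]
    rw [hword, ht, leftInvSeq, leftInvSeq_concat, hπ, count_cons,
      count_map_of_injective _ _ (MulAut.conj (s j)).injective, concat_eq_append, count_append]
    have h₁ : t * s j * t⁻¹ = t ↔ s j = t := by
      rw [mul_inv_eq_iff_eq_mul, mul_left_cancel_iff]
    have h₂ : s j = MulAut.conj (s j) t ↔ s j = t := by
      rw [eq_comm, MulAut.conj_apply, mul_inv_eq_iff_eq_mul, mul_left_cancel_iff, eq_comm]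
    -- The two new entries, `sⱼ` and the conjugate of `t sⱼ t⁻¹`, are `sⱼ t sⱼ` iff `sⱼ = t`.
    obtain ⟨k, hk⟩ := ih
    simp only [count_singleton, beq_iff_eq, h₁, h₂]
    split_ifs
    · exact ⟨k + 1, by omega⟩
    · exact ⟨k, by omega⟩

theorem mem_leftInvSeq_of_length_mul_lt {ω : List B} {t : W} (ht : cs.IsReflection t)
    (hlt : ℓ (t * π ω) < ℓ (π ω)) : t ∈ lis ω := by
  -- `t` occurs an odd number of times in the inversion sequence of the palindrome `υ i υʳ`, and
  -- not in that of a reduced word `σ` for `t * π ω`; compare the parities for `ω` and `υ i υʳ σ`.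
  obtain ⟨u, i, rfl⟩ := ht
  obtain ⟨υ, -, rfl⟩ := cs.exists_isReduced u
  set t := π υ * s i * (π υ)⁻¹ with ht
  obtain ⟨σ, hσ, hσω⟩ := cs.exists_isReduced (t * π ω)
  have htt : t * t = 1 := IsReflection.mul_self ⟨π υ, i, rfl⟩
  have hτ : π (υ ++ i :: υ.reverse) = t := by
    simp [ht, wordProd_append, wordProd_cons, wordProd_reverse, mul_assoc]
  have hπ : π (υ ++ i :: υ.reverse ++ σ) = π ω := by
    rw [wordProd_append, hτ, ← hσω, ← mul_assoc, htt, one_mul]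
  have hσt : t ∉ lis σ := fun hmem => by
    have hinv := (cs.isLeftInversion_of_mem_leftInvSeq hσ hmem).2
    rw [← hσω, ← mul_assoc, htt, one_mul] at hinv
    omega
  have hodd : Odd ((lis ω).count t) := by
    have hfix : t = MulAut.conj t t := by simp
    rw [← ZMod.natCast_eq_one_iff_odd, ← cs.natCast_count_leftInvSeq_eq hπ, leftInvSeq_append,
      count_append, hτ]
    nth_rw 2 [hfix]
    rw [count_map_of_injective _ _ (MulAut.conj t).injective, count_eq_zero.mpr hσt, add_zero,
      ZMod.natCast_eq_one_iff_odd]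
    exact cs.odd_count_leftInvSeq_palindrome υ i
  exact count_pos_iff.mp hodd.pos

end CoxeterSystem

end ReflectionCocycle

namespace CoxeterSystem

local prefix:100 "s " => cs.simple
local prefix:100 "π " => cs.wordProd
local prefix:100 "ℓ " => cs.length

open Relation

theorem exists_wordProd_eraseIdx_eq_mul {ω : List B} {t : W} (ht : cs.IsReflection t)
    (hlt : ℓ (t * π ω) < ℓ (π ω)) : ∃ j < ω.length, π (ω.eraseIdx j) = t * π ω := by
  obtain ⟨j, hj, rfl⟩ := getElem_of_mem (cs.mem_leftInvSeq_of_length_mul_lt ht hlt)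
  refine ⟨j, by simpa using hj, ?_⟩
  rw [← getD_leftInvSeq_mul_wordProd, getD_eq_getElem]

theorem exists_isReduced_sublist (ω : List B) :
    ∃ P, P <+ ω ∧ cs.IsReduced P ∧ π P = π ω := by
  induction ω with
  | nil => exact ⟨[], Sublist.refl _, by simp [IsReduced], rfl⟩
  | cons i ω ih =>
    obtain ⟨P, hPω, hP, hPπ⟩ := ih
    rcases cs.length_simple_mul (π P) i with hup | hdown
    · refine ⟨i :: P, hPω.cons_cons i, ?_, by rw [wordProd_cons, wordProd_cons, hPπ]⟩
      rw [IsReduced, wordProd_cons, hup, hP.eq, length_cons]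
    · obtain ⟨j, hj, hjπ⟩ := cs.exists_wordProd_eraseIdx_eq_mul (ω := P)
        (cs.isReflection_simple i) (by omega)
      refine ⟨P.eraseIdx j, (eraseIdx_sublist P j).trans (hPω.trans (sublist_cons_self i ω)),
        ?_, by rw [hjπ, hPπ, wordProd_cons]⟩
      rw [IsReduced, hjπ, length_eraseIdx_of_lt hj]
      have := hP.eq
      omega

variable {cs} in
theorem IsReduced.append_singleton {P : List B} {i : B} (hP : cs.IsReduced P)
    (h : ℓ (π P) < ℓ (π P * s i)) : cs.IsReduced (P ++ [i]) := by
  rw [IsReduced, wordProd_append, wordProd_singleton, length_append, length_singleton, ← hP.eq]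
  rcases cs.length_mul_simple (π P) i with h' | h' <;> omega

def BruhatEdge (u w : W) : Prop := ∃ t, cs.IsReflection t ∧ w = t * u ∧ ℓ u < ℓ w

theorem bruhatEdge_simple_mul {u : W} {i : B} (h : ℓ u < ℓ (s i * u)) :
    cs.BruhatEdge u (s i * u) :=
  ⟨s i, cs.isReflection_simple i, rfl, h⟩

theorem simple_mul_eq_mul_of_length_lt {u t : W} {i : B} (ht : cs.IsReflection t)
    (hu : ℓ u < ℓ (t * u)) (hitu : ℓ (s i * (t * u)) < ℓ (s i * u)) : s i * u = t * u := by
  -- Exchange `t` in a reduced word `i :: R` for `t * u`: deleting a letter of `R` instead of `i`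
  -- would make `s i * u` shorter than `s i * t * u`.
  obtain ⟨R, hR, hRπ⟩ := cs.exists_isReduced (s i * (t * u))
  have hiR : π (i :: R) = t * u := by rw [wordProd_cons, ← hRπ, simple_mul_simple_cancel_left]
  have htt : t * (t * u) = u := by rw [← mul_assoc, ht.mul_self, one_mul]
  obtain ⟨j, -, hj⟩ := cs.exists_wordProd_eraseIdx_eq_mul (ω := i :: R) ht (by rwa [hiR, htt])
  rw [hiR, htt] at hj
  cases j with
  | zero =>
    rw [eraseIdx_cons_zero, ← hRπ] at hj
    conv_lhs => rw [← hj, simple_mul_simple_cancel_left]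
  | succ k =>
    rw [eraseIdx_cons_succ, wordProd_cons] at hj
    have hle : ℓ (s i * u) ≤ R.length := by
      rw [← hj, simple_mul_simple_cancel_left]
      exact (cs.length_wordProd_le _).trans (length_eraseIdx_le R k)
    have := hR.eq
    rw [← hRπ] at this
    omega

variable {cs} in
theorem BruhatEdge.simple_mul {u w : W} (h : cs.BruhatEdge u w) (i : B) :
    ReflTransGen cs.BruhatEdge (s i * u) w ∨ ReflTransGen cs.BruhatEdge (s i * u) (s i * w) := by
  obtain ⟨t, ht, rfl, hlt⟩ := h
  by_cases hdown : ℓ (s i * u) < ℓ u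
  · refine .inl (.head ⟨s i, cs.isReflection_simple i, ?_, ?_⟩ (.single ⟨t, ht, rfl, hlt⟩))
    · rw [simple_mul_simple_cancel_left]
    · exact hdown
  have hconj : s i * (t * u) = (s i * t * s i) * (s i * u) := by
    simp [mul_assoc, simple_mul_simple_cancel_left]
  have hit : cs.IsReflection (s i * t * s i) := by simpa [inv_simple] using ht.conj (s i)
  rcases (hconj ▸ hit.length_mul_right_ne (s i * u)).lt_or_gt with hlt' | hgt
  · exact .inl (by rw [cs.simple_mul_eq_mul_of_length_lt ht hlt hlt'])
  · exact .inr (.single ⟨s i * t * s i, hit, hconj, hgt⟩)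

theorem reflTransGen_bruhatEdge_simple_mul {x y : W} (h : ReflTransGen cs.BruhatEdge x y)
    (i : B) :
    ReflTransGen cs.BruhatEdge (s i * x) y ∨ ReflTransGen cs.BruhatEdge (s i * x) (s i * y) := by
  induction h with
  | refl => exact .inr .refl
  | tail _ hyz ih =>
    rcases ih with h | h
    · exact .inl (h.tail hyz)
    · exact (hyz.simple_mul i).imp h.trans h.trans

theorem reflTransGen_bruhatEdge_of_sublist {P Q : List B} (hPQ : P <+ Q) (hQ : cs.IsReduced Q) :
    ReflTransGen cs.BruhatEdge (π P) (π Q) := by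
  induction Q generalizing P with
  | nil => rw [sublist_nil.mp hPQ]
  | cons i Q ih =>
    have hQ' : cs.IsReduced Q := by simpa using hQ.drop 1
    have hasc : ℓ (π Q) < ℓ (s i * π Q) := by
      rw [← wordProd_cons, hQ.eq, hQ'.eq, length_cons]
      exact Nat.lt_succ_self _
    rw [wordProd_cons]
    rcases sublist_cons_iff.mp hPQ with hPQ | ⟨P₁, rfl, hP₁Q⟩
    · exact (ih hPQ hQ').tail (cs.bruhatEdge_simple_mul hasc)
    · rw [wordProd_cons]
      rcases cs.reflTransGen_bruhatEdge_simple_mul (ih hP₁Q hQ') i with h | h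
      · exact h.tail (cs.bruhatEdge_simple_mul hasc)
      · exact h

theorem bruhatLe_of_reflTransGen_bruhatEdge {u w : W}
    (h : ReflTransGen cs.BruhatEdge u w) : BruhatLe cs u w := by
  induction h with
  | refl => exact fun Q hQ hQw => ⟨Q, Sublist.refl Q, hQ, hQw⟩
  | @tail y _ _ hyw ih =>
    obtain ⟨t, ht, rfl, hlt⟩ := hyw
    intro R hR hRw
    have htt : t * (t * y) = y := by rw [← mul_assoc, ht.mul_self, one_mul]
    obtain ⟨j, -, hj⟩ := cs.exists_wordProd_eraseIdx_eq_mul (ω := R) ht (by rwa [hRw, htt])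
    rw [hRw, htt] at hj
    obtain ⟨R', hR'R, hR', hR'π⟩ := cs.exists_isReduced_sublist (R.eraseIdx j)
    obtain ⟨P, hPR', hP, hPπ⟩ := ih R' hR' (hR'π.trans hj)
    exact ⟨P, hPR'.trans (hR'R.trans (eraseIdx_sublist R j)), hP, hPπ⟩

theorem bruhatLe_wordProd_of_sublist {P Q : List B} (hPQ : P <+ Q)
    (hQ : cs.IsReduced Q) : BruhatLe cs (cs.wordProd P) (cs.wordProd Q) :=
  cs.bruhatLe_of_reflTransGen_bruhatEdge (cs.reflTransGen_bruhatEdge_of_sublist hPQ hQ)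

end CoxeterSystem

theorem dmask_sublist (Q : List B) (F : Finset ℕ) : (dmask Q F).Sublist Q := by
  simpa [dmask] using (filter_sublist (l := Q.zipIdx)).map Prod.fst

theorem dmask_append_singleton_of_mem {Q : List B} {F : Finset ℕ} (a : B) (h : Q.length ∈ F) :
    dmask (Q ++ [a]) F = dmask Q F := by
  simp [dmask, zipIdx_append, h]

theorem dmask_append_singleton_of_notMem {Q : List B} {F : Finset ℕ} (a : B) (h : Q.length ∉ F) :
    dmask (Q ++ [a]) F = dmask Q F ++ [a] := by
  simp [dmask, zipIdx_append, h]


theorem length_notMem_of_isFace_append_singleton {Q : List B} {a : B} {w : W} {F : Finset ℕ}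
    (hQw : ∀ P, P <+ Q → cs.wordProd P ≠ w) (hF : IsFace cs (Q ++ [a]) w F) :
    Q.length ∉ F := fun hlast => by
  obtain ⟨-, P, hP, -, hPw⟩ := hF
  rw [dmask_append_singleton_of_mem a hlast] at hP
  exact hQw P (hP.trans (dmask_sublist Q F)) hPw

theorem isFace_of_isFace_append_singleton {Q : List B} {a : B} {w : W} {F : Finset ℕ}
    (hQw : ∀ P, P <+ Q → cs.wordProd P ≠ w) (hF : IsFace cs (Q ++ [a]) w F) :
    IsFace cs Q (w * cs.simple a) F := by
  have hlast := length_notMem_of_isFace_append_singleton cs hQw hF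
  obtain ⟨hFQ, P, hP, hPred, rfl⟩ := hF
  rw [dmask_append_singleton_of_notMem a hlast, sublist_append_iff] at hP
  obtain ⟨P₁, P₂, rfl, hP₁, hP₂⟩ := hP
  rcases sublist_singleton.mp hP₂ with rfl | rfl
  · exact absurd (by simp) (hQw P₁ (hP₁.trans (dmask_sublist Q F)))
  · refine ⟨?_, P₁, hP₁, by simpa using hPred.take P₁.length, ?_⟩
    · simpa [Finset.range_add_one, Finset.subset_insert_iff_of_notMem hlast] using hFQ
    · rw [cs.wordProd_append, cs.wordProd_singleton, cs.simple_mul_simple_cancel_right]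

theorem isFace_append_singleton_of_isFace {Q : List B} {a : B} {w : W} {F : Finset ℕ}
    (hw : cs.length (w * cs.simple a) < cs.length w) (hF : IsFace cs Q (w * cs.simple a) F) :
    IsFace cs (Q ++ [a]) w F := by
  obtain ⟨hFQ, P, hP, hPred, hPw⟩ := hF
  have hlast : Q.length ∉ F := fun h => by simpa using hFQ h
  refine ⟨hFQ.trans (by simp), P ++ [a], ?_, hPred.append_singleton ?_, ?_⟩
  · rw [dmask_append_singleton_of_notMem a hlast]
    exact hP.append (Sublist.refl [a])
  · rwa [hPw, cs.simple_mul_simple_cancel_right]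
  · rw [cs.wordProd_append, cs.wordProd_singleton, hPw, cs.simple_mul_simple_cancel_right]

end

/-- If `Q = Q' ++ [a]` is a reduced word for `v`, `w * sₐ < w` and `w ≰ v * sₐ`, then no face
of `Δ(Q,w)` contains the last position, and `Δ(Q,w) = Δ(Q', w * sₐ)`. -/
theorem subword_complex_no_last (Q' : List B) (a : B) (v w : W)
    (hQ : cs.IsReduced (Q' ++ [a])) (hv : cs.wordProd (Q' ++ [a]) = v)
    (hdesc : cs.length (w * cs.simple a) < cs.length w)
    (hnle : ¬ BruhatLe cs w (v * cs.simple a)) :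
    (∀ F : Finset ℕ, IsFace cs (Q' ++ [a]) w F → Q'.length ∉ F) ∧
    (∀ F : Finset ℕ, IsFace cs (Q' ++ [a]) w F ↔ IsFace cs Q' (w * cs.simple a) F) := by
  have hQ' : cs.IsReduced Q' := by simpa using hQ.take Q'.length
  have hv' : cs.wordProd Q' = v * cs.simple a := by
    rw [← hv, cs.wordProd_append, cs.wordProd_singleton, cs.simple_mul_simple_cancel_right]
  have hQ'w (P : List B) (hP : P <+ Q') : cs.wordProd P ≠ w := fun hPw =>
    hnle (hPw ▸ hv' ▸ cs.bruhatLe_wordProd_of_sublist hP hQ')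
  exact ⟨fun _ => length_notMem_of_isFace_append_singleton cs hQ'w,
    fun _ => ⟨isFace_of_isFace_append_singleton cs hQ'w, isFace_append_singleton_of_isFace cs hdesc⟩⟩
end

section
/- For a face F of the subword complex Δ(Q,w) (with Q a reduced word for v), the Demazure product of the complementary subword Q∖F is ≥ w in the Bruhat order. -/
variable {B W : Type*} [DecidableEq B] [Group W] {M : CoxeterMatrix B} (cs : CoxeterSystem M W)

/-!
Write `≤` for the chain form of the Bruhat order: `u ≤ v` when `v` is reached from `u` by right
multiplications by reflections that raise the length. Every subword `P` of a word `R` satisfies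
`π P ≤ Dem R`, by induction on `R`: appending a letter `s` replaces `Dem R` by some `D ≥ Dem R`
having `s` as a right descent, and the lifting property (`u ≤ v` and `v s < v` imply `u s ≤ v`)
takes care of the subwords ending in `s`. The strong exchange property, which comes from Tits'
action of `W` on `W × ZMod 2`, then turns a chain into reduced subwords of every reduced word.
-/

-- The braid relations for Tits' action reduce to this with `c = s i * s j` and `a = s j`.
open Classical in
lemma pow_apply_of_apply_eq_conj {G : Type*} [Group G] {g : Equiv.Perm (G × ZMod 2)} {a c : G}
    (hca : c⁻¹ * a = a * c)
    (hg : ∀ t e, g (t, e) =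
      (c * t * c⁻¹, e + (if t = a then 1 else 0) + if t = a * c then 1 else 0))
    (n : ℕ) (t : G) (e : ZMod 2) :
    (g ^ n) (t, e) = (c ^ n * t * (c ^ n)⁻¹,
      e + ∑ k ∈ Finset.range (2 * n), if t = a * c ^ k then 1 else 0) := by
  induction n generalizing t e with
  | zero => simp
  | succ n ih =>
    have hshift (k : ℕ) : (c * t * c⁻¹ = a * c ^ k) ↔ t = a * c ^ (k + 1 + 1) := by
      have : a * c ^ (k + 1 + 1) = c⁻¹ * (a * c ^ k) * c := by
        rw [← mul_assoc, hca]; group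
      rw [this]
      constructor
      · intro h; rw [← h]; group
      · rintro rfl; group
    rw [pow_succ, Equiv.Perm.mul_apply, hg, ih, Prod.mk.injEq, Nat.mul_succ,
      Finset.sum_range_succ', Finset.sum_range_succ']
    refine ⟨by group, ?_⟩
    simp only [hshift, pow_zero, mul_one, zero_add, pow_one]
    abel

lemma sum_range_two_mul_eq_zero {R : Type*} [Ring R] [CharP R 2] {f : ℕ → R} {m : ℕ}
    (hf : ∀ k, f (m + k) = f k) :
    ∑ k ∈ Finset.range (2 * m), f k = 0 := by
  simp only [two_mul, Finset.sum_range_add, hf, CharTwo.add_self_eq_zero]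

namespace CoxeterSystem

variable {B W : Type*} [Group W] {M : CoxeterMatrix B} (cs : CoxeterSystem M W)

local prefix:100 "s" => cs.simple
local prefix:100 "π" => cs.wordProd
local prefix:100 "ℓ" => cs.length

lemma simple_mul_mul_simple_eq_iff (i : B) (t x : W) :
    s i * t * s i = x ↔ t = s i * x * s i := by
  constructor
  · rintro rfl; simp [mul_assoc, cs.simple_mul_simple_cancel_left]
  · rintro rfl; simp [mul_assoc, cs.simple_mul_simple_cancel_left]

-- Tits' action of `s i`: the bit records the parity of the number of times `t` occurs in the
-- right inversion sequence (see `titsRep_wordProd`).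
open Classical in
noncomputable def titsPerm (i : B) : Equiv.Perm (W × ZMod 2) :=
  Function.Involutive.toPerm (fun p => (s i * p.1 * s i, p.2 + if p.1 = s i then 1 else 0)) <| by
    rintro ⟨t, e⟩
    ext
    · simp [mul_assoc, cs.simple_mul_simple_cancel_left]
    · have h : s i * t * s i = s i ↔ t = s i := by
        rw [simple_mul_mul_simple_eq_iff, cs.simple_mul_simple_cancel_right]
      simp only [h, add_assoc, CharTwo.add_self_eq_zero, add_zero]

open Classical in
lemma titsPerm_apply (i : B) (t : W) (e : ZMod 2) :
    titsPerm cs i (t, e) = (s i * t * s i, e + if t = s i then 1 else 0) :=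
  rfl

lemma isLiftable_titsPerm : M.IsLiftable (titsPerm cs) := by
  intro i j
  classical
  have hca : (s i * s j)⁻¹ * s j = s j * (s i * s j) := by
    simp [mul_assoc, cs.inv_simple]
  have hg (t : W) (e : ZMod 2) : (titsPerm cs i * titsPerm cs j) (t, e) =
      ((s i * s j) * t * (s i * s j)⁻¹,
        e + (if t = s j then 1 else 0) + if t = s j * (s i * s j) then 1 else 0) := by
    rw [Equiv.Perm.mul_apply, titsPerm_apply, titsPerm_apply, simple_mul_mul_simple_eq_iff,
      mul_inv_rev, cs.inv_simple, cs.inv_simple]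
    simp only [mul_assoc]
  ext ⟨t, e⟩ : 1
  rw [pow_apply_of_apply_eq_conj hca hg, cs.simple_mul_simple_pow,
    sum_range_two_mul_eq_zero fun k => by rw [pow_add, cs.simple_mul_simple_pow, one_mul]]
  simp

noncomputable def titsRep : W →* Equiv.Perm (W × ZMod 2) :=
  cs.lift ⟨titsPerm cs, isLiftable_titsPerm cs⟩

open Classical in
lemma titsRep_wordProd (ω : List B) (t : W) (e : ZMod 2) :
    titsRep cs (π ω) (t, e) =
      (π ω * t * (π ω)⁻¹, e + ((cs.rightInvSeq ω).count t : ZMod 2)) := by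
  induction ω generalizing t e with
  | nil => simp [titsRep]
  | cons i ω ih =>
    have hconj : π ω * t * (π ω)⁻¹ = s i ↔ (π ω)⁻¹ * s i * π ω = t := by
      constructor
      · rintro h; rw [← h]; group
      · rintro rfl; group
    rw [cs.wordProd_cons, map_mul, Equiv.Perm.mul_apply, ih, titsRep, lift_apply_simple,
      titsPerm_apply, hconj]
    simp only [rightInvSeq, List.count_cons, beq_iff_eq, Prod.mk.injEq, mul_inv_rev, cs.inv_simple]
    refine ⟨by group, ?_⟩
    push_cast
    ring

noncomputable def rightInvParity (w t : W) : ZMod 2 := (titsRep cs w (t, 0)).2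

open Classical in
lemma rightInvParity_wordProd (ω : List B) (t : W) :
    cs.rightInvParity (π ω) t = (cs.rightInvSeq ω).count t := by
  simp [rightInvParity, titsRep_wordProd]

lemma titsRep_apply (w t : W) (e : ZMod 2) :
    titsRep cs w (t, e) = (w * t * w⁻¹, e + cs.rightInvParity w t) := by
  obtain ⟨ω, rfl⟩ := cs.wordProd_surjective w
  classical
  rw [titsRep_wordProd, rightInvParity_wordProd]

lemma rightInvParity_mul (x y t : W) :
    cs.rightInvParity (x * y) t = cs.rightInvParity y t + cs.rightInvParity x (y * t * y⁻¹) := by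
  have h := titsRep_apply cs (x * y) t 0
  rw [map_mul, Equiv.Perm.mul_apply, titsRep_apply, titsRep_apply, Prod.mk.injEq] at h
  simpa using h.2.symm

lemma rightInvParity_one (t : W) : cs.rightInvParity 1 t = 0 := by
  simp [rightInvParity]

lemma rightInvParity_simple_self (i : B) : cs.rightInvParity (s i) (s i) = 1 := by
  classical
  simp [rightInvParity, titsRep, titsPerm_apply]

variable {cs} in
lemma IsReflection.rightInvParity_self {t : W} (ht : cs.IsReflection t) :
    cs.rightInvParity t t = 1 := by
  obtain ⟨u, i, rfl⟩ := ht
  have h₁ := cs.rightInvParity_mul (u * s i) u⁻¹ (u * s i * u⁻¹)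
  have h₂ := cs.rightInvParity_mul u (s i) (s i)
  have h₃ := cs.rightInvParity_mul u⁻¹ u (s i)
  simp only [inv_inv, inv_mul_cancel, rightInvParity_one, rightInvParity_simple_self,
    cs.inv_simple, cs.simple_mul_simple_cancel_left, mul_assoc, mul_one,
    inv_mul_cancel_left] at h₁ h₂ h₃ ⊢
  linear_combination h₁ + h₂ - h₃

lemma mem_rightInvSeq_of_rightInvParity_eq_one {ω : List B} {t : W}
    (h : cs.rightInvParity (π ω) t = 1) : t ∈ cs.rightInvSeq ω := by
  classical
  rw [rightInvParity_wordProd] at h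
  by_contra hmem
  simp [List.count_eq_zero_of_not_mem hmem] at h

lemma length_mul_lt_of_rightInvParity_eq_one {w t : W} (h : cs.rightInvParity w t = 1) :
    ℓ (w * t) < ℓ w := by
  obtain ⟨ω, hω, rfl⟩ := cs.exists_isReduced w
  exact (cs.isRightInversion_of_mem_rightInvSeq hω
    (cs.mem_rightInvSeq_of_rightInvParity_eq_one h)).2

variable {cs} in
lemma IsReflection.rightInvParity_eq_one {w t : W} (ht : cs.IsReflection t)
    (h : ℓ (w * t) < ℓ w) : cs.rightInvParity w t = 1 := by
  by_contra hne
  have h₀ : cs.rightInvParity w t = 0 := by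
    revert hne
    generalize cs.rightInvParity w t = x
    revert x
    decide
  have h₁ : cs.rightInvParity (w * t) t = 1 := by
    rw [rightInvParity_mul, ht.rightInvParity_self, ht.mul_self, one_mul, ht.inv, h₀, add_zero]
  have := cs.length_mul_lt_of_rightInvParity_eq_one h₁
  rw [mul_assoc, ht.mul_self, mul_one] at this
  omega

/-- The strong exchange property. -/
theorem exists_eraseIdx_wordProd_eq_mul {ω : List B} {t : W} (ht : cs.IsReflection t)
    (h : ℓ (π ω * t) < ℓ (π ω)) : ∃ j < ω.length, π (ω.eraseIdx j) = π ω * t := by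
  obtain ⟨j, hj, rfl⟩ := List.mem_iff_getElem.mp
    (cs.mem_rightInvSeq_of_rightInvParity_eq_one (ht.rightInvParity_eq_one h))
  refine ⟨j, by simpa using hj, ?_⟩
  rw [← cs.wordProd_mul_getD_rightInvSeq, List.getD_eq_getElem _ _ hj]

/-- The deletion property. -/
theorem exists_isReduced_sublist_wordProd_eq (ω : List B) :
    ∃ P, P.Sublist ω ∧ cs.IsReduced P ∧ π P = π ω := by
  induction ω using List.reverseRecOn with
  | nil => exact ⟨[], .refl _, by simp [IsReduced], rfl⟩
  | append_singleton ω i ih =>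
    obtain ⟨P, hsub, hred, hprod⟩ := ih
    have hlen : ℓ (π P) = P.length := hred
    rcases cs.length_mul_simple (π P) i with hup | hdown
    · refine ⟨P ++ [i], hsub.append (.refl _), ?_, by simp [wordProd_append, hprod]⟩
      simp [IsReduced, wordProd_append, hup, hlen]
    · obtain ⟨j, hj, hjP⟩ :=
        cs.exists_eraseIdx_wordProd_eq_mul (ω := P) (cs.isReflection_simple i) (by omega)
      refine ⟨P.eraseIdx j,
        (List.eraseIdx_sublist _ _).trans (hsub.trans (List.sublist_append_left _ _)), ?_,
        by rw [hjP, hprod, wordProd_append, wordProd_singleton]⟩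
      rw [IsReduced, hjP, List.length_eraseIdx_of_lt hj]
      omega

def BruhatStep (u v : W) : Prop := ∃ t, cs.IsReflection t ∧ u * t = v ∧ ℓ u < ℓ v

abbrev ChainLe : W → W → Prop := Relation.ReflTransGen cs.BruhatStep

lemma bruhatStep_mul_simple {u : W} {i : B} (h : ℓ u < ℓ (u * s i)) :
    cs.BruhatStep u (u * s i) :=
  ⟨s i, cs.isReflection_simple i, rfl, h⟩

lemma bruhatStep_mul_simple_of_length_lt {u t : W} {i : B} (ht : cs.IsReflection t)
    (h : ℓ (u * s i) < ℓ (u * t * s i)) : cs.BruhatStep (u * s i) (u * t * s i) := by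
  refine ⟨s i * t * s i, ?_, by simp [mul_assoc, cs.simple_mul_simple_cancel_left], h⟩
  simpa [cs.inv_simple] using ht.conj (s i)

lemma eq_simple_or_length_mul_simple_lt {u t : W} (ht : cs.IsReflection t)
    (hu : ℓ u < ℓ (u * t)) (i : B) : t = s i ∨ ℓ (u * s i) < ℓ (u * t * s i) := by
  rcases cs.length_mul_simple (u * t) i with hup | hdown
  · have := cs.length_mul_simple u i
    omega
  obtain ⟨Ω, hΩ, hΩprod⟩ := cs.exists_isReduced (u * t * s i)
  have hprod : π (Ω ++ [i]) = u * t := by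
    rw [wordProd_append, wordProd_singleton, ← hΩprod, cs.simple_mul_simple_cancel_right]
  have hut : u * t * t = u := by rw [mul_assoc, ht.mul_self, mul_one]
  obtain ⟨j, hj, hjprod⟩ :=
    cs.exists_eraseIdx_wordProd_eq_mul (ω := Ω ++ [i]) ht (by rwa [hprod, hut])
  rw [hprod, hut] at hjprod
  -- deleting the final `s i` of `Ω ++ [i]` forces `t = s i`; any other deletion shortens `u * s i`
  rcases lt_or_ge j Ω.length with hjΩ | hjΩ
  · right
    rw [List.eraseIdx_append_of_lt_length hjΩ, wordProd_append, wordProd_singleton] at hjprod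
    rw [hΩprod, hΩ.eq, ← hjprod, cs.simple_mul_simple_cancel_right]
    calc ℓ (π (Ω.eraseIdx j)) ≤ (Ω.eraseIdx j).length := cs.length_wordProd_le _
      _ < Ω.length := by rw [List.length_eraseIdx_of_lt hjΩ]; omega
  · left
    have hjΩ' : j = Ω.length := by simp at hj; omega
    simp only [hjΩ', List.eraseIdx_append_of_length_le le_rfl, Nat.sub_self,
      List.eraseIdx_cons_zero, List.append_nil] at hjprod
    have h : u * (t * s i) = u * 1 := by rw [← mul_assoc, hΩprod, hjprod, mul_one]
    rwa [mul_left_cancel_iff, mul_eq_one_iff_eq_inv, cs.inv_simple] at h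

/-- The lifting property of the Bruhat order. -/
theorem chainLe_mul_simple_of_length_mul_simple_lt {u v : W} {i : B} (huv : cs.ChainLe u v)
    (hv : ℓ (v * s i) < ℓ v) : cs.ChainLe (u * s i) v := by
  induction huv using Relation.ReflTransGen.head_induction_on with
  | refl =>
    exact .single ⟨s i, cs.isReflection_simple i, cs.simple_mul_simple_cancel_right i, hv⟩
  | head hstep hchain ih =>
    obtain ⟨t, ht, rfl, hlt⟩ := hstep
    rcases cs.eq_simple_or_length_mul_simple_lt ht hlt i with rfl | hlt'
    · exact hchain
    · exact .head (cs.bruhatStep_mul_simple_of_length_lt ht hlt') ih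

theorem bruhatLe_of_chainLe {u v : W} (h : cs.ChainLe u v) : BruhatLe cs u v := by
  induction h with
  | refl => exact fun Q hQ hQv => ⟨Q, .refl Q, hQ, hQv⟩
  | tail _ hstep ih =>
    obtain ⟨t, ht, rfl, hlt⟩ := hstep
    intro Q hQ hQv
    have hwt : ∀ w : W, w * t * t = w := fun w => by rw [mul_assoc, ht.mul_self, mul_one]
    obtain ⟨j, -, hj⟩ := cs.exists_eraseIdx_wordProd_eq_mul (ω := Q) ht (by rwa [hQv, hwt])
    obtain ⟨P, hPsub, hPred, hP⟩ := cs.exists_isReduced_sublist_wordProd_eq (Q.eraseIdx j)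
    obtain ⟨P', hP'sub, hP'red, hP'⟩ := ih P hPred (by rw [hP, hj, hQv, hwt])
    exact ⟨P', hP'sub.trans (hPsub.trans (List.eraseIdx_sublist _ _)), hP'red, hP'⟩

lemma dem_append_singleton (R : List B) (i : B) :
    Dem cs (R ++ [i]) =
      if ℓ (Dem cs R) < ℓ (Dem cs R * s i) then Dem cs R * s i else Dem cs R := by
  rw [Dem, Dem, List.foldl_append]
  rfl

lemma chainLe_dem_append_singleton (R : List B) (i : B) :
    cs.ChainLe (Dem cs R) (Dem cs (R ++ [i])) := by
  rw [dem_append_singleton]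
  split_ifs with h
  · exact .single (cs.bruhatStep_mul_simple h)
  · exact .refl

lemma length_dem_append_singleton_mul_simple_lt (R : List B) (i : B) :
    ℓ (Dem cs (R ++ [i]) * s i) < ℓ (Dem cs (R ++ [i])) := by
  have := cs.length_mul_simple (Dem cs R) i
  rw [dem_append_singleton]
  split_ifs with h
  · rw [cs.simple_mul_simple_cancel_right]; exact h
  · omega

theorem chainLe_dem_of_sublist {P R : List B} (h : P.Sublist R) :
    cs.ChainLe (π P) (Dem cs R) := by
  induction R using List.reverseRecOn generalizing P with
  | nil =>
    rw [List.sublist_nil.mp h]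
    exact .refl
  | append_singleton R i ih =>
    have hD := cs.chainLe_dem_append_singleton R i
    obtain ⟨P, P', rfl, hP, hP'⟩ := List.sublist_append_iff.mp h
    rcases List.sublist_singleton.mp hP' with rfl | rfl
    · simpa using (ih hP).trans hD
    · rw [wordProd_append, wordProd_singleton]
      exact cs.chainLe_mul_simple_of_length_mul_simple_lt ((ih hP).trans hD)
        (cs.length_dem_append_singleton_mul_simple_lt R i)

end CoxeterSystem

theorem dem_of_face_ge (Q : List B) (w : W)
    (F : Finset ℕ) (hF : IsFace cs Q w F) :
    BruhatLe cs w (Dem cs (dmask Q F)) := by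
  obtain ⟨-, P, hsub, hred, rfl⟩ := hF
  exact cs.bruhatLe_of_chainLe (cs.chainLe_dem_of_sublist hsub)
end
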